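/- arXiv:cs/0510079 — 8 statements merged into one kernel-verified Lean document; each statement's English description precedes it below -/
import Mathlib

section
/- Let E = (H, O, μ) be an evidence space and P a probability on H × O with P(H×{ob} | {h}×O) = μ_h(ob) for all h, ob. Let μ₀(h) = P({h}×O) be the marginal prior. Then for any observation ob with P(H×{ob}) > 0, the Dempster combination μ₀ ⊕ w_E(ob,·) equals the Bayesian posterior: (μ₀ ⊕ w_E(ob,·))(h) = P({h}×O | H×{ob}). -/
/-- Dempster's rule of combination on distributions over a finite set. -/
noncomputable def dempster {H : Type*} [Fintype H] (μ₁ μ₂ : H → ℝ) : H → ℝ :=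
  fun h => μ₁ h * μ₂ h / ∑ h', μ₁ h' * μ₂ h'

/-- If `P` is a joint probability on `H × O` whose conditional on each
hypothesis `h` agrees with the likelihood function `μ h` (i.e.
`P({h}×O ∩ H×{ob}) = P({h}×O)·μ h ob`), then combining the marginal prior
`μ₀ h = P({h}×O)` with the weight of evidence via Dempster's rule yields the
Bayesian posterior `P({h}×O | H×{ob})`. -/
theorem dempster_update_eq_bayes {H O : Type*} [Fintype H] [Fintype O]
    (μ : H → O → ℝ) (P : H → O → ℝ)
    (hPnn : ∀ h ob, 0 ≤ P h ob) (hPs : ∑ h, ∑ ob, P h ob = 1)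
    (hμnn : ∀ h ob, 0 ≤ μ h ob)
    (hposs : ∀ ob, 0 < ∑ h, μ h ob)
    (hcond : ∀ h ob, P h ob = (∑ ob', P h ob') * μ h ob)
    (ob : O) (hob : 0 < ∑ h, P h ob) :
    ∀ h, dempster (fun h' => ∑ ob', P h' ob')
        (fun h' => μ h' ob / ∑ h'', μ h'' ob) h =
      P h ob / ∑ h', P h' ob := by
  intro h
  have hS : (∑ h'', μ h'' ob) ≠ 0 := (hposs ob).ne'
  have key : ∀ h', (∑ ob', P h' ob') * (μ h' ob / ∑ h'', μ h'' ob)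
      = P h' ob / ∑ h'', μ h'' ob := by
    intro h'
    rw [hcond h' ob]
    field_simp
  unfold dempster
  simp only [key]
  rw [← Finset.sum_div]
  rw [div_div_div_cancel_right₀]
  exact hS
end

section
/- Combining evidence from two independent observations via Dempster's rule reproduces the weight of evidence of the joint observation: if the likelihood of a pair is μ_h(⟨ob₁,ob₂⟩) = μ_h(ob₁)·μ_h(ob₂), and both Σ_h μ_h(ob₁)·μ_h(ob₂) > 0 and the single-observation normalizers are positive, then w_E(⟨ob₁,ob₂⟩, ·) = w_E(ob₁,·) ⊕ w_E(ob₂,·). -/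
/-- The weight of evidence of a pair of independent observations (whose joint
likelihood is the product of the individual likelihoods) is the Dempster
combination of the individual weights of evidence. -/
theorem weight_of_pair_eq_dempster {H O : Type*} [Fintype H]
    (μ : H → O → ℝ) (hμnn : ∀ h ob, 0 ≤ μ h ob) (ob₁ ob₂ : O)
    (h1 : 0 < ∑ h, μ h ob₁) (h2 : 0 < ∑ h, μ h ob₂)
    (h12 : 0 < ∑ h, μ h ob₁ * μ h ob₂) :
    ∀ h, μ h ob₁ * μ h ob₂ / (∑ h', μ h' ob₁ * μ h' ob₂) =
      dempster (fun h' => μ h' ob₁ / ∑ h'', μ h'' ob₁)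
        (fun h' => μ h' ob₂ / ∑ h'', μ h'' ob₂) h := by
  intro h
  unfold dempster
  have hA : (∑ h'', μ h'' ob₁) ≠ 0 := ne_of_gt h1
  have hB : (∑ h'', μ h'' ob₂) ≠ 0 := ne_of_gt h2
  have hAB : (∑ h', μ h' ob₁ * μ h' ob₂) ≠ 0 := ne_of_gt h12
  have key : (∑ h', μ h' ob₁ / (∑ h'', μ h'' ob₁) * (μ h' ob₂ / ∑ h'', μ h'' ob₂))
      = (∑ h', μ h' ob₁ * μ h' ob₂) / ((∑ h'', μ h'' ob₁) * (∑ h'', μ h'' ob₂)) := by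
    rw [Finset.sum_div]
    apply Finset.sum_congr rfl
    intro x _
    field_simp
  rw [key]
  field_simp
end

section
/- A generalized evidence space admits a refinement by an ordinary evidence space if and only if it is uncorrelated. -/
/-- A generalized evidence space admits a refinement by an ordinary evidence
space if and only if it is uncorrelated. -/
theorem refinement_iff_uncorrelated (H O : Type) (Δ : Set (H → O → ℝ))
    (hΔ : Δ.Nonempty) :
    (∃ (H' : Type) (μ' : H' → O → ℝ) (g : H' → H),
        Function.Surjective g ∧
          ∀ μ, μ ∈ Δ ↔ ∀ h, ∃ h', g h' = h ∧ μ h = μ' h') ↔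
      ∃ P : H → Set (O → ℝ), Δ = {μ | ∀ h, μ h ∈ P h} := by
  constructor
  · rintro ⟨H', μ', g, hg, hiff⟩
    refine ⟨fun h => {v | ∃ h', g h' = h ∧ v = μ' h'}, ?_⟩
    ext μ
    simpa using hiff μ
  · rintro ⟨P, rfl⟩
    obtain ⟨μ₀, hμ₀⟩ := hΔ
    refine ⟨{p : H × (O → ℝ) // p.2 ∈ P p.1}, fun p => p.1.2, fun p => p.1.1, ?_, ?_⟩
    · intro h
      exact ⟨⟨(h, μ₀ h), hμ₀ h⟩, rfl⟩
    · intro μ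
      constructor
      · intro hμ h
        exact ⟨⟨(h, μ h), hμ h⟩, rfl, rfl⟩
      · rintro hμ h
        obtain ⟨⟨⟨h₁, v⟩, hv⟩, rfl, heq⟩ := hμ h
        exact heq ▸ hv
end

section
/- Upper-weight bound on posteriors in an uncorrelated generalized evidence space: for every likelihood mapping μ ∈ Δ and the corresponding weight w, if all denominators are positive, then (μ₀ ⊕ w(ob,·))(h) ≤ (w̄(ob,h)·μ₀(h)) / (w̄(ob,h)·μ₀(h) + Σ_{h'≠h} w̲(ob,h')·μ₀(h')), where w̄(ob,h) = max over w' ∈ w_G of w'(ob,h) and w̲(ob,h) = min over w' ∈ w_G of w'(ob,h). -/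
/-- Upper-weight bound on posteriors in an uncorrelated generalized evidence
space: for each likelihood mapping `μ ∈ Δ`, the Dempster-updated posterior of
`h` is at most `w̄(ob,h)μ₀(h) / (w̄(ob,h)μ₀(h) + Σ_{h'≠h} w̲(ob,h')μ₀(h'))`. -/
theorem posterior_upper_bound {H O : Type*} [Fintype H] [DecidableEq H]
    (Δ : Finset (H → O → ℝ)) (hΔ : Δ.Nonempty)
    (P : H → Finset (O → ℝ)) (hunc : ∀ μ, μ ∈ Δ ↔ ∀ h, μ h ∈ P h)
    (μ₀ : H → ℝ) (hμ₀nn : ∀ h, 0 ≤ μ₀ h) (hμ₀s : ∑ h, μ₀ h = 1)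
    (hlik : ∀ μ ∈ Δ, ∀ h ob, 0 ≤ μ h ob)
    (hposs : ∀ μ ∈ Δ, ∀ ob, 0 < ∑ h, μ h ob)
    (μ : H → O → ℝ) (hμ : μ ∈ Δ) (ob : O) (h : H)
    (hdem : 0 < ∑ h', μ₀ h' * (μ h' ob / ∑ h'', μ h'' ob))
    (hden : 0 < (Δ.sup' hΔ fun ν => ν h ob / ∑ h'', ν h'' ob) * μ₀ h +
      ∑ h' ∈ Finset.univ.erase h,
        (Δ.inf' hΔ fun ν => ν h' ob / ∑ h'', ν h'' ob) * μ₀ h') :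
    μ₀ h * (μ h ob / ∑ h'', μ h'' ob) /
        (∑ h', μ₀ h' * (μ h' ob / ∑ h'', μ h'' ob)) ≤
      (Δ.sup' hΔ fun ν => ν h ob / ∑ h'', ν h'' ob) * μ₀ h /
        ((Δ.sup' hΔ fun ν => ν h ob / ∑ h'', ν h'' ob) * μ₀ h +
          ∑ h' ∈ Finset.univ.erase h,
            (Δ.inf' hΔ fun ν => ν h' ob / ∑ h'', ν h'' ob) * μ₀ h') := by
  have hwnn : ∀ ν ∈ Δ, ∀ h', 0 ≤ ν h' ob / ∑ h'', ν h'' ob :=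
    fun ν hν h' => div_nonneg (hlik ν hν h' ob) (hposs ν hν ob).le
  set A := (Δ.sup' hΔ fun ν => ν h ob / ∑ h'', ν h'' ob) * μ₀ h with hA
  set B := ∑ h' ∈ Finset.univ.erase h,
      (Δ.inf' hΔ fun ν => ν h' ob / ∑ h'', ν h'' ob) * μ₀ h' with hB
  set a := μ₀ h * (μ h ob / ∑ h'', μ h'' ob) with ha
  set R := ∑ h' ∈ Finset.univ.erase h, μ₀ h' * (μ h' ob / ∑ h'', μ h'' ob) with hR
  have hSa : (∑ h', μ₀ h' * (μ h' ob / ∑ h'', μ h'' ob)) = a + R := by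
    exact (Finset.add_sum_erase _ _ (Finset.mem_univ h)).symm
  have hann : 0 ≤ a := mul_nonneg (hμ₀nn h) (hwnn μ hμ h)
  have haA : a ≤ A := by
    rw [ha, hA, mul_comm]
    exact mul_le_mul_of_nonneg_right (Finset.le_sup' (fun ν => ν h ob / ∑ h'', ν h'' ob) hμ) (hμ₀nn h)
  have hAnn : 0 ≤ A := hann.trans haA
  have hBnn : 0 ≤ B :=
    Finset.sum_nonneg fun h' _ => mul_nonneg
      (Finset.le_inf' hΔ _ fun ν hν => hwnn ν hν h') (hμ₀nn h')
  have hBR : B ≤ R :=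
    Finset.sum_le_sum fun h' _ => by
      rw [mul_comm (μ₀ h')]
      exact mul_le_mul_of_nonneg_right (Finset.inf'_le (fun ν => ν h' ob / ∑ h'', ν h'' ob) hμ) (hμ₀nn h')
  rw [div_le_div_iff₀ hdem hden, hSa]
  nlinarith [mul_le_mul_of_nonneg_right haA hBnn, mul_le_mul_of_nonneg_left hBR hAnn]
end

section
/- Lower-weight bound on posteriors: under the same hypotheses, (μ₀ ⊕ w(ob,·))(h) ≥ (w̲(ob,h)·μ₀(h)) / (w̲(ob,h)·μ₀(h) + Σ_{h'≠h} w̄(ob,h')·μ₀(h')), for every weight w ∈ w_G, provided the denominators are positive. -/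
/-! The posterior of `h` has the form `x / (x + y)` with `x = μ₀(h) w(ob,h)` and
`y = Σ_{h' ≠ h} μ₀(h') w(ob,h')`. This ratio increases with `x` and decreases with `y`, and
replacing `w(ob,h)` by the lower weight and every `w(ob,h')` by the upper weight lowers `x`
and raises `y`. -/

open Finset

section Ratio

variable {α : Type*} [Field α] [LinearOrder α] [IsStrictOrderedRing α]

theorem div_add_le_div_add {x x' y y' : α} (hx : 0 ≤ x) (hxx' : x ≤ x') (hy' : 0 ≤ y')
    (hyy' : y' ≤ y) : x / (x + y) ≤ x' / (x' + y') := by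
  rcases hx.eq_or_lt with rfl | hx
  · simp only [zero_div]
    exact div_nonneg hxx' (add_nonneg hxx' hy')
  have hx' : 0 < x' := hx.trans_le hxx'
  rw [div_le_div_iff₀ (by linarith) (by linarith)]
  nlinarith [mul_le_mul hxx' hyy' hy' hx'.le]

theorem mul_div_sum_ge_of_bounds {ι : Type*} [Fintype ι] [DecidableEq ι] (p w hi : ι → α)
    (lo : α) (i : ι) (hp : ∀ j, 0 ≤ p j) (hw : ∀ j, 0 ≤ w j) (hlo : 0 ≤ lo) (hlo_le : lo ≤ w i)
    (hle_hi : ∀ j, w j ≤ hi j) :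
    lo * p i / (lo * p i + ∑ j ∈ univ.erase i, hi j * p j) ≤ p i * w i / ∑ j, p j * w j := by
  rw [← add_sum_erase univ _ (mem_univ i)]
  refine div_add_le_div_add (mul_nonneg hlo (hp i)) ?_
    (sum_nonneg fun j _ => mul_nonneg (hp j) (hw j)) (sum_le_sum fun j _ => ?_)
  · rw [mul_comm]
    exact mul_le_mul_of_nonneg_left hlo_le (hp i)
  · rw [mul_comm]
    exact mul_le_mul_of_nonneg_right (hle_hi j) (hp j)

end Ratio

theorem posterior_lower_bound_general {H O : Type*} [Fintype H] [DecidableEq H]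
    (Δ : Finset (H → O → ℝ)) (hΔ : Δ.Nonempty)
    (μ₀ : H → ℝ) (hμ₀nn : ∀ h, 0 ≤ μ₀ h)
    (hlik : ∀ μ ∈ Δ, ∀ h ob, 0 ≤ μ h ob)
    (μ : H → O → ℝ) (hμ : μ ∈ Δ) (ob : O) (h : H) :
    (Δ.inf' hΔ fun ν => ν h ob / ∑ h'', ν h'' ob) * μ₀ h /
        ((Δ.inf' hΔ fun ν => ν h ob / ∑ h'', ν h'' ob) * μ₀ h +
          ∑ h' ∈ Finset.univ.erase h,
            (Δ.sup' hΔ fun ν => ν h' ob / ∑ h'', ν h'' ob) * μ₀ h') ≤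
      μ₀ h * (μ h ob / ∑ h'', μ h'' ob) /
        (∑ h', μ₀ h' * (μ h' ob / ∑ h'', μ h'' ob)) := by
  have hweight : ∀ ν ∈ Δ, ∀ h', 0 ≤ ν h' ob / ∑ h'', ν h'' ob := fun ν hν h' =>
    div_nonneg (hlik ν hν h' ob) (sum_nonneg fun h'' _ => hlik ν hν h'' ob)
  exact mul_div_sum_ge_of_bounds μ₀ (fun h' => μ h' ob / ∑ h'', μ h'' ob)
    (fun h' => Δ.sup' hΔ fun ν => ν h' ob / ∑ h'', ν h'' ob) _ h hμ₀nn (hweight μ hμ)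
    (le_inf' _ _ fun ν hν => hweight ν hν h) (inf'_le _ hμ)
    fun h' => le_sup' (fun ν => ν h' ob / ∑ h'', ν h'' ob) hμ

/-- Lower-weight bound on posteriors in an uncorrelated generalized evidence
space: for each likelihood mapping `μ ∈ Δ`, the Dempster-updated posterior of
`h` is at least `w̲(ob,h)μ₀(h) / (w̲(ob,h)μ₀(h) + Σ_{h'≠h} w̄(ob,h')μ₀(h'))`. -/
theorem posterior_lower_bound {H O : Type*} [Fintype H] [DecidableEq H]
    (Δ : Finset (H → O → ℝ)) (hΔ : Δ.Nonempty)
    (P : H → Finset (O → ℝ)) (hunc : ∀ μ, μ ∈ Δ ↔ ∀ h, μ h ∈ P h)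
    (μ₀ : H → ℝ) (hμ₀nn : ∀ h, 0 ≤ μ₀ h) (hμ₀s : ∑ h, μ₀ h = 1)
    (hlik : ∀ μ ∈ Δ, ∀ h ob, 0 ≤ μ h ob)
    (hposs : ∀ μ ∈ Δ, ∀ ob, 0 < ∑ h, μ h ob)
    (μ : H → O → ℝ) (hμ : μ ∈ Δ) (ob : O) (h : H)
    (hdem : 0 < ∑ h', μ₀ h' * (μ h' ob / ∑ h'', μ h'' ob))
    (hden : 0 < (Δ.inf' hΔ fun ν => ν h ob / ∑ h'', ν h'' ob) * μ₀ h +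
      ∑ h' ∈ Finset.univ.erase h,
        (Δ.sup' hΔ fun ν => ν h' ob / ∑ h'', ν h'' ob) * μ₀ h') :
    (Δ.inf' hΔ fun ν => ν h ob / ∑ h'', ν h'' ob) * μ₀ h /
        ((Δ.inf' hΔ fun ν => ν h ob / ∑ h'', ν h'' ob) * μ₀ h +
          ∑ h' ∈ Finset.univ.erase h,
            (Δ.sup' hΔ fun ν => ν h' ob / ∑ h'', ν h'' ob) * μ₀ h') ≤
      μ₀ h * (μ h ob / ∑ h'', μ h'' ob) /
        (∑ h', μ₀ h' * (μ h' ob / ∑ h'', μ h'' ob)) :=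
  posterior_lower_bound_general Δ hΔ μ₀ hμ₀nn hlik μ hμ ob h
end

section
/- In an uncorrelated generalized evidence space with exactly two hypotheses h₁, h₂ and positive denominators, the upper bound on the posterior is attained: sup over w ∈ w_G of (μ₀ ⊕ w(ob,·))(h₁) equals (μ₀(h₁)·w̄(ob,h₁)) / (μ₀(h₁)·w̄(ob,h₁) + μ₀(h₂)·w̲(ob,h₂)). -/
/-- In the two-hypothesis case (`true` playing the role of `h₁` and `false`
of `h₂`), the upper bound on the Dempster-updated posterior is attained:
the sup over weight functions of the posterior of `h₁` equals
`μ₀(h₁)w̄(ob,h₁) / (μ₀(h₁)w̄(ob,h₁) + μ₀(h₂)w̲(ob,h₂))`. -/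
theorem two_hypothesis_posterior_sup_attained {O : Type*}
    (W : Finset (O → Bool → ℝ)) (hW : W.Nonempty)
    (hsum : ∀ w ∈ W, ∀ ob, w ob true + w ob false = 1)
    (hrng : ∀ w ∈ W, ∀ ob b, 0 ≤ w ob b)
    (μ₀ : Bool → ℝ) (hnn : ∀ b, 0 ≤ μ₀ b) (hs : μ₀ true + μ₀ false = 1)
    (ob : O)
    (hdem : ∀ w ∈ W, 0 < μ₀ true * w ob true + μ₀ false * w ob false)
    (hbd : 0 < μ₀ true * (W.sup' hW fun w => w ob true) +
      μ₀ false * (W.inf' hW fun w => w ob false)) :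
    (W.sup' hW fun w => μ₀ true * w ob true /
        (μ₀ true * w ob true + μ₀ false * w ob false)) =
      μ₀ true * (W.sup' hW fun w => w ob true) /
        (μ₀ true * (W.sup' hW fun w => w ob true) +
          μ₀ false * (W.inf' hW fun w => w ob false)) := by
  set a := μ₀ true with ha
  set b := μ₀ false with hb
  have hna : 0 ≤ a := hnn true
  have hnb : 0 ≤ b := hnn false
  set s := W.sup' hW fun w => w ob true with hsdef
  set t := W.inf' hW fun w => w ob false with htdef
  obtain ⟨w₀, hw₀, hw₀s⟩ := Finset.exists_mem_eq_sup' hW fun w => w ob true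
  -- t = 1 - s, attained at w₀
  have ht : t = 1 - s := by
    apply le_antisymm
    · have h1 : w₀ ob false = 1 - s := by
        have := hsum w₀ hw₀ ob; linarith [hw₀s]
      calc t ≤ w₀ ob false := Finset.inf'_le _ hw₀
        _ = 1 - s := h1
    · apply Finset.le_inf'
      intro w hw
      have h1 := hsum w hw ob
      have h2 : w ob true ≤ s := Finset.le_sup' (fun w => w ob true) hw
      linarith
  apply le_antisymm
  · apply Finset.sup'_le
    intro w hw
    have hx : w ob true ≤ s := Finset.le_sup' (fun w => w ob true) hw
    have hy : t ≤ w ob false := Finset.inf'_le _ hw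
    have hd1 := hdem w hw
    rw [div_le_div_iff₀ hd1 hbd]
    have hx0 : 0 ≤ w ob true := hrng w hw ob true
    have ht0 : 0 ≤ t := by rw [htdef]; exact Finset.le_inf' hW _ fun u hu => hrng u hu ob false
    have hs0 : 0 ≤ s := le_trans hx0 hx
    nlinarith [mul_nonneg (mul_nonneg (mul_nonneg hna hnb) (sub_nonneg.2 hx)) ht0,
      mul_nonneg (mul_nonneg (mul_nonneg hna hnb) hs0) (sub_nonneg.2 hy)]
  · have h1 : w₀ ob false = 1 - s := by
      have := hsum w₀ hw₀ ob; linarith [hw₀s]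
    have : a * s / (a * s + b * t)
        = a * w₀ ob true / (a * w₀ ob true + b * w₀ ob false) := by
      rw [ht, ← h1, hsdef, hw₀s]
    rw [this]
    exact Finset.le_sup' (fun w => a * w ob true / (a * w ob true + b * w ob false)) hw₀
end

section
/- Upper weight in terms of upper/lower likelihoods: in an uncorrelated generalized evidence space G = (H, O, Δ) with Δ = Π_{h∈H} P_h (each P_h finite, nonempty), for every ob and h, w̄_G(ob,h) = (P_h)*(ob) / ((P_h)*(ob) + Σ_{h'≠h} (P_{h'})_*(ob)), where (P_h)*(ob) = max_{μ∈P_h} μ(ob) and (P_h)_*(ob) = min_{μ∈P_h} μ(ob), provided the denominator is positive. -/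
/-- Upper weight in terms of upper/lower likelihoods: in an uncorrelated
generalized evidence space with `Δ = Π_h P_h`, the upper weight of evidence is
`w̄(ob,h) = (P_h)*(ob) / ((P_h)*(ob) + Σ_{h'≠h} (P_{h'})_*(ob))`. -/
theorem upper_weight_eq {H O : Type*} [Fintype H] [DecidableEq H]
    (Δ : Finset (H → O → ℝ)) (hΔ : Δ.Nonempty)
    (P : H → Finset (O → ℝ)) (hP : ∀ h, (P h).Nonempty)
    (hunc : ∀ μ, μ ∈ Δ ↔ ∀ h, μ h ∈ P h)
    (hnn : ∀ h, ∀ ν ∈ P h, ∀ ob, 0 ≤ ν ob)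
    (hposs : ∀ μ ∈ Δ, ∀ ob, 0 < ∑ h, μ h ob)
    (ob : O) (h : H)
    (hden : 0 < ((P h).sup' (hP h) fun ν => ν ob) +
      ∑ h' ∈ Finset.univ.erase h, ((P h').inf' (hP h') fun ν => ν ob)) :
    (Δ.sup' hΔ fun μ => μ h ob / ∑ h', μ h' ob) =
      ((P h).sup' (hP h) fun ν => ν ob) /
        (((P h).sup' (hP h) fun ν => ν ob) +
          ∑ h' ∈ Finset.univ.erase h,
            ((P h').inf' (hP h') fun ν => ν ob)) := by
  classical
  set A := (P h).sup' (hP h) fun ν => ν ob with hA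
  set S := ∑ h' ∈ Finset.univ.erase h, ((P h').inf' (hP h') fun ν => ν ob) with hS
  have hAnn : 0 ≤ A := by
    obtain ⟨ν, hν, hνe⟩ := Finset.exists_mem_eq_sup' (hP h) (fun ν => ν ob)
    rw [hA, hνe]; exact hnn h ν hν ob
  have hSnn : 0 ≤ S := by
    apply Finset.sum_nonneg
    intro h' _
    obtain ⟨ν, hν, hνe⟩ := Finset.exists_mem_eq_inf' (hP h') (fun ν => ν ob)
    rw [hνe]; exact hnn h' ν hν ob
  apply le_antisymm
  · apply Finset.sup'_le
    intro μ hμ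
    have hsum : ∑ h', μ h' ob = μ h ob + ∑ h' ∈ Finset.univ.erase h, μ h' ob := by
      exact (Finset.add_sum_erase _ _ (Finset.mem_univ h)).symm
    have hmem := (hunc μ).1 hμ
    have ha : μ h ob ≤ A := Finset.le_sup' (fun ν => ν ob) (hmem h)
    have hs : S ≤ ∑ h' ∈ Finset.univ.erase h, μ h' ob := by
      apply Finset.sum_le_sum
      intro h' _
      exact Finset.inf'_le (fun ν => ν ob) (hmem h')
    have hpos : 0 < μ h ob + ∑ h' ∈ Finset.univ.erase h, μ h' ob := by
      rw [← hsum]; exact hposs μ hμ ob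
    rw [hsum, div_le_div_iff₀ hpos hden]
    nlinarith [hnn h (μ h) (hmem h) ob]
  · obtain ⟨νm, hνm, hνme⟩ := Finset.exists_mem_eq_sup' (hP h) (fun ν => ν ob)
    choose g hg hge using fun h' => Finset.exists_mem_eq_inf' (hP h') (fun ν => ν ob)
    set μ : H → O → ℝ := fun h' => if h' = h then νm else g h' with hμdef
    have hμΔ : μ ∈ Δ := by
      rw [hunc]
      intro h'
      by_cases hh : h' = h
      · subst hh; simpa [hμdef] using hνm
      · simpa [hμdef, hh] using hg h'
    have hval : μ h ob / ∑ h', μ h' ob = A / (A + S) := by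
      have h1 : μ h ob = A := by simp only [hμdef, if_pos rfl]; rw [hA, hνme]
      have h2 : ∑ h', μ h' ob = A + S := by
        rw [← Finset.add_sum_erase _ _ (Finset.mem_univ h), h1]
        congr 1
        apply Finset.sum_congr rfl
        intro h' hh'
        have : h' ≠ h := Finset.ne_of_mem_erase hh'
        simp [hμdef, this, ← hge h']
      rw [h1, h2]
    calc A / (A + S) = μ h ob / ∑ h', μ h' ob := hval.symm
      _ ≤ _ := Finset.le_sup' (fun μ => μ h ob / ∑ h', μ h' ob) hμΔ
end

section
/- Lower weight in terms of upper/lower likelihoods: in the same uncorrelated setting, w̲_G(ob,h) = (P_h)_*(ob) / ((P_h)_*(ob) + Σ_{h'≠h} (P_{h'})*(ob)), where w̲_G(ob,h) = min over μ ∈ Δ of w_μ(ob,h), provided the denominator is positive. -/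
/-- Lower weight in terms of upper/lower likelihoods: in an uncorrelated
generalized evidence space with `Δ = Π_h P_h`, the lower weight of evidence is
`w̲(ob,h) = (P_h)_*(ob) / ((P_h)_*(ob) + Σ_{h'≠h} (P_{h'})*(ob))`. -/
theorem lower_weight_eq {H O : Type*} [Fintype H] [DecidableEq H]
    (Δ : Finset (H → O → ℝ)) (hΔ : Δ.Nonempty)
    (P : H → Finset (O → ℝ)) (hP : ∀ h, (P h).Nonempty)
    (hunc : ∀ μ, μ ∈ Δ ↔ ∀ h, μ h ∈ P h)
    (hnn : ∀ h, ∀ ν ∈ P h, ∀ ob, 0 ≤ ν ob)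
    (hposs : ∀ μ ∈ Δ, ∀ ob, 0 < ∑ h, μ h ob)
    (ob : O) (h : H)
    (hden : 0 < ((P h).inf' (hP h) fun ν => ν ob) +
      ∑ h' ∈ Finset.univ.erase h, ((P h').sup' (hP h') fun ν => ν ob)) :
    (Δ.inf' hΔ fun μ => μ h ob / ∑ h', μ h' ob) =
      ((P h).inf' (hP h) fun ν => ν ob) /
        (((P h).inf' (hP h) fun ν => ν ob) +
          ∑ h' ∈ Finset.univ.erase h,
            ((P h').sup' (hP h') fun ν => ν ob)) := by
  set a := (P h).inf' (hP h) fun ν => ν ob with ha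
  set B := ∑ h' ∈ Finset.univ.erase h, ((P h').sup' (hP h') fun ν => ν ob) with hB
  -- choose extremal measure
  have hchoice : ∀ h' : H, ∃ ν ∈ P h',
      (if h' = h then (P h').inf' (hP h') (fun ν => ν ob)
        else (P h').sup' (hP h') (fun ν => ν ob)) = ν ob := by
    intro h'
    by_cases hh : h' = h
    · simp only [hh, if_true]
      exact Finset.exists_mem_eq_inf' (hP h) _
    · simp only [hh, if_false]
      exact Finset.exists_mem_eq_sup' (hP h') _
  classical
  set μs : H → O → ℝ := fun h' => Classical.choose (hchoice h') with hμs
  have hμsP : ∀ h', μs h' ∈ P h' := fun h' => (Classical.choose_spec (hchoice h')).1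
  have hμsval : ∀ h', (if h' = h then (P h').inf' (hP h') (fun ν => ν ob)
      else (P h').sup' (hP h') (fun ν => ν ob)) = μs h' ob :=
    fun h' => (Classical.choose_spec (hchoice h')).2
  have hμsΔ : μs ∈ Δ := (hunc μs).2 hμsP
  have hμsh : μs h ob = a := by
    have := hμsval h
    simpa using this.symm
  have hμssum : ∑ h', μs h' ob = a + B := by
    rw [← Finset.add_sum_erase Finset.univ _ (Finset.mem_univ h), hμsh]
    congr 1
    apply Finset.sum_congr rfl
    intro h' hh'
    have hne : h' ≠ h := Finset.ne_of_mem_erase hh'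
    have := hμsval h'
    simp only [hne, if_false] at this
    exact this.symm
  -- nonnegativity facts
  have haneg : 0 ≤ a := by
    rw [← hμsh]; exact hnn h (μs h) (hμsP h) ob
  have hBneg : 0 ≤ B := by
    apply Finset.sum_nonneg
    intro h' hh'
    obtain ⟨ν, hν, hνe⟩ := Finset.exists_mem_eq_sup' (hP h') (fun ν => ν ob)
    rw [hνe]; exact hnn h' ν hν ob
  apply le_antisymm
  · -- inf' ≤ value at μs = RHS
    have := Finset.inf'_le (fun μ => μ h ob / ∑ h', μ h' ob) hμsΔ
    rw [hμsh, hμssum] at this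
    exact this
  · -- RHS ≤ each μ
    rw [Finset.le_inf'_iff]
    intro μ hμ
    have hμP : ∀ h', μ h' ∈ P h' := (hunc μ).1 hμ
    have hsum_pos : 0 < ∑ h', μ h' ob := hposs μ hμ ob
    have hμh_ge : a ≤ μ h ob := Finset.inf'_le _ (hμP h)
    have hrest_le : ∑ h' ∈ Finset.univ.erase h, μ h' ob ≤ B :=
      Finset.sum_le_sum fun h' _ => Finset.le_sup' (fun ν => ν ob) (hμP h')
    have hrest_nn : 0 ≤ ∑ h' ∈ Finset.univ.erase h, μ h' ob :=
      Finset.sum_nonneg fun h' _ => hnn h' (μ h') (hμP h') ob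
    rw [div_le_div_iff₀ hden hsum_pos]
    have hsplit : ∑ h', μ h' ob = μ h ob + ∑ h' ∈ Finset.univ.erase h, μ h' ob :=
      (Finset.add_sum_erase Finset.univ _ (Finset.mem_univ h)).symm
    rw [hsplit]
    have key : a * ∑ h' ∈ Finset.univ.erase h, μ h' ob ≤ μ h ob * B :=
      le_trans (mul_le_mul_of_nonneg_left hrest_le haneg)
        (mul_le_mul_of_nonneg_right hμh_ge hBneg)
    nlinarith [mul_le_mul_of_nonneg_left hμh_ge haneg]
end
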